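/- arXiv:2408.14225 — 5 statements merged into one kernel-verified Lean document; each statement's English description precedes it below -/
import Mathlib

section
/- Let P ⊂ ℝ^d be a finite nonempty set, let w : P → [0,∞), and let C* ⊂ ℝ^d be a finite nonempty set. For each c ∈ C* choose c_P ∈ P with ‖c_P − c‖₂ ≤ ‖p − c‖₂ for all p ∈ P, and put C″ := {c_P : c ∈ C*} ⊆ P. Then |C″| ≤ |C*| and ∑_{p∈P} w(p)·min_{c∈C″} ‖p − c‖₂ ≤ 2·∑_{p∈P} w(p)·min_{c∈C*} ‖p − c‖₂. -/
open scoped Classical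

/-- Projecting every center of `C*` to its closest point of `P`
yields a set `C'' ⊆ P` with `|C''| ≤ |C*|` whose weighted sum of nearest-center
distances is at most twice that of `C*`. -/
theorem stmt_1 {d : ℕ} (P Cstar : Finset (EuclideanSpace ℝ (Fin d)))
    (hP : P.Nonempty) (hC : Cstar.Nonempty)
    (w : EuclideanSpace ℝ (Fin d) → ℝ) (hw : ∀ p ∈ P, 0 ≤ w p)
    (f : EuclideanSpace ℝ (Fin d) → EuclideanSpace ℝ (Fin d))
    (hfP : ∀ c ∈ Cstar, f c ∈ P)
    (hfmin : ∀ c ∈ Cstar, ∀ p ∈ P, ‖f c - c‖ ≤ ‖p - c‖) :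
    (Cstar.image f).card ≤ Cstar.card ∧
      ∑ p ∈ P, w p * ((Cstar.image f).inf' (hC.image f) fun c => ‖p - c‖) ≤
        2 * ∑ p ∈ P, w p * (Cstar.inf' hC fun c => ‖p - c‖) := by
  refine ⟨Finset.card_image_le, ?_⟩
  rw [Finset.mul_sum]
  refine Finset.sum_le_sum fun p hp => ?_
  rw [← mul_assoc, mul_comm (2:ℝ) (w p), mul_assoc]
  refine mul_le_mul_of_nonneg_left ?_ (hw p hp)
  obtain ⟨c, hc, hcmin⟩ := Cstar.exists_mem_eq_inf' hC (fun c => ‖p - c‖)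
  calc (Cstar.image f).inf' (hC.image f) (fun c' => ‖p - c'‖) ≤ ‖p - f c‖ :=
        Finset.inf'_le _ (Finset.mem_image_of_mem f hc)
    _ ≤ ‖p - c‖ + ‖c - f c‖ := by
        have := norm_sub_le_norm_sub_add_norm_sub p c (f c)
        linarith [norm_sub_le (p - c) (c - f c)]
    _ ≤ ‖p - c‖ + ‖p - c‖ := by
        have h := hfmin c hc p hp
        rw [norm_sub_rev c (f c)]
        linarith
    _ = 2 * Cstar.inf' hC (fun c => ‖p - c‖) := by rw [hcmin]; ring
end

section
/- Let P ⊂ ℝ^d be a finite set of size n ≥ k ≥ 1 and let w : P → [0,∞). Then for every set C* ⊂ ℝ^d with |C*| = k there exists a subset C' ⊆ P with |C'| = k such that, for every nearest-point partitions of P with respect to C' and to C*, ℓ̃((P,w),C') ≤ 2·log₂²(1+n)·ℓ̃((P,w),C*). -/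
open scoped Classical

/-- `Part` is a nearest-point partition of `P` with respect to the centers `C`:
the sets `{Part c}_{c∈C}` are subsets of `P`, cover `P`, are pairwise disjoint,
and every `p ∈ Part c` has `c` as a closest center. -/
def IsNearPartition {d : ℕ} (P C : Finset (EuclideanSpace ℝ (Fin d)))
    (Part : EuclideanSpace ℝ (Fin d) → Finset (EuclideanSpace ℝ (Fin d))) : Prop :=
  (∀ c ∈ C, Part c ⊆ P) ∧
  (∀ p ∈ P, ∃ c ∈ C, p ∈ Part c) ∧
  (∀ c ∈ C, ∀ c' ∈ C, c ≠ c' → Disjoint (Part c) (Part c')) ∧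
  (∀ c ∈ C, ∀ p ∈ Part c, ∀ c' ∈ C, ‖p - c‖ ≤ ‖p - c'‖)

/-- The weighted relaxed fitting loss
`ℓ̃((P,w),C) = ∑_{c∈C} (1/log₂²(|P_c|+1)) ∑_{p∈P_c} w(p)‖p−c‖₂`. -/
noncomputable def relLoss {d : ℕ} (C : Finset (EuclideanSpace ℝ (Fin d)))
    (Part : EuclideanSpace ℝ (Fin d) → Finset (EuclideanSpace ℝ (Fin d)))
    (w : EuclideanSpace ℝ (Fin d) → ℝ) : ℝ :=
  ∑ c ∈ C, (1 / (Real.logb 2 ((Part c).card + 1)) ^ 2) * ∑ p ∈ Part c, w p * ‖p - c‖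

/-- For every `C*` of size `k` there is a `k`-element subset `C' ⊆ P` with
`ℓ̃((P,w),C') ≤ 2·log₂²(1+n)·ℓ̃((P,w),C*)`, for every nearest-point partitions. -/
theorem stmt_3 {d k : ℕ} (hk : 1 ≤ k) (P : Finset (EuclideanSpace ℝ (Fin d)))
    (hn : k ≤ P.card)
    (w : EuclideanSpace ℝ (Fin d) → ℝ) (hw : ∀ p ∈ P, 0 ≤ w p)
    (Cstar : Finset (EuclideanSpace ℝ (Fin d))) (hCstar : Cstar.card = k) :
    ∃ C' ⊆ P, C'.card = k ∧
      ∀ Part' PartStar : EuclideanSpace ℝ (Fin d) → Finset (EuclideanSpace ℝ (Fin d)),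
        IsNearPartition P C' Part' → IsNearPartition P Cstar PartStar →
          relLoss C' Part' w ≤
            2 * (Real.logb 2 (1 + P.card)) ^ 2 * relLoss Cstar PartStar w := by
  classical
  have hPpos : 0 < P.card := lt_of_lt_of_le hk hn
  have hPne : P.Nonempty := Finset.card_pos.mp hPpos
  have hCne : Cstar.Nonempty := Finset.card_pos.mp (by rw [hCstar]; exact hk)
  choose f hfP hfmin using fun c => P.exists_min_image (fun q => ‖c - q‖) hPne
  obtain ⟨C', hSC', hC'P, hC'card⟩ :=
    Finset.exists_subsuperset_card_eq
      (t := P) (Finset.image_subset_iff.mpr fun c _ => hfP c)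
      (le_trans Finset.card_image_le hCstar.le) hn
  refine ⟨C', hC'P, hC'card, ?_⟩
  intro Part' PartStar h' hstar
  obtain ⟨h'sub, h'cov, h'dis, h'near⟩ := h'
  obtain ⟨hssub, hscov, hsdis, hsnear⟩ := hstar
  set m : EuclideanSpace ℝ (Fin d) → ℝ :=
    fun p => Cstar.inf' hCne (fun c => ‖p - c‖) with hm
  have hmnn : ∀ p, 0 ≤ m p := by
    intro p
    exact Finset.le_inf' hCne _ (fun c _ => norm_nonneg _)
  -- L is the big log
  set L : ℝ := Real.logb 2 (1 + P.card) with hL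
  have hL1 : (1 : ℝ) ≤ L := by
    rw [hL]
    have h2 : (2 : ℝ) ≤ 1 + P.card := by
      have : (1 : ℝ) ≤ (P.card : ℝ) := by exact_mod_cast hPpos
      linarith
    calc (1 : ℝ) = Real.logb 2 2 := (Real.logb_self_eq_one (by norm_num : (1:ℝ) < 2)).symm
      _ ≤ Real.logb 2 (1 + P.card) := Real.logb_le_logb_of_le (by norm_num : (1:ℝ) < 2) (by norm_num) h2
  -- Step 1: relLoss C' Part' w ≤ ∑ c ∈ C', ∑ p ∈ Part' c, 2 * (w p * m p)
  have key1 : relLoss C' Part' w ≤ ∑ c ∈ C', ∑ p ∈ Part' c, 2 * (w p * m p) := by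
    unfold relLoss
    apply Finset.sum_le_sum
    intro c hc
    by_cases hne : (Part' c).Nonempty
    · have hinner : ∑ p ∈ Part' c, w p * ‖p - c‖ ≤ ∑ p ∈ Part' c, 2 * (w p * m p) := by
        apply Finset.sum_le_sum
        intro p hp
        have hpP : p ∈ P := h'sub c hc hp
        obtain ⟨c0, hc0, hc0eq⟩ := Cstar.exists_mem_eq_inf' hCne (fun c => ‖p - c‖)
        have hfc0 : f c0 ∈ C' := hSC' (Finset.mem_image_of_mem f hc0)
        have h1 : ‖p - c‖ ≤ ‖p - f c0‖ := h'near c hc p hp (f c0) hfc0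
        have h2 : ‖p - f c0‖ ≤ ‖p - c0‖ + ‖c0 - f c0‖ := by
          calc ‖p - f c0‖ = ‖(p - c0) + (c0 - f c0)‖ := by rw [sub_add_sub_cancel]
            _ ≤ ‖p - c0‖ + ‖c0 - f c0‖ := norm_add_le _ _
        have h3 : ‖c0 - f c0‖ ≤ ‖c0 - p‖ := hfmin c0 p hpP
        have h4 : ‖c0 - p‖ = ‖p - c0‖ := norm_sub_rev _ _
        have hmp : m p = ‖p - c0‖ := hc0eq
        have hdist : ‖p - c‖ ≤ 2 * m p := by
          rw [hmp]; linarith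
        have := mul_le_mul_of_nonneg_left hdist (hw p hpP)
        linarith
      have hnn : 0 ≤ ∑ p ∈ Part' c, w p * ‖p - c‖ :=
        Finset.sum_nonneg fun p hp => mul_nonneg (hw p (h'sub c hc hp)) (norm_nonneg _)
      have hlog1 : (1 : ℝ) ≤ Real.logb 2 ((Part' c).card + 1) := by
        have hcard : 1 ≤ (Part' c).card := Finset.card_pos.mpr hne
        have : (2 : ℝ) ≤ (Part' c).card + 1 := by
          have : (1 : ℝ) ≤ ((Part' c).card : ℝ) := by exact_mod_cast hcard
          linarith
        calc (1 : ℝ) = Real.logb 2 2 := (Real.logb_self_eq_one (by norm_num : (1:ℝ) < 2)).symm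
          _ ≤ _ := Real.logb_le_logb_of_le (by norm_num : (1:ℝ) < 2) (by norm_num) this
      have hcoef : 1 / (Real.logb 2 ((Part' c).card + 1)) ^ 2 ≤ 1 := by
        rw [div_le_one (by positivity)]
        nlinarith
      calc (1 / (Real.logb 2 ((Part' c).card + 1)) ^ 2) * ∑ p ∈ Part' c, w p * ‖p - c‖
          ≤ 1 * ∑ p ∈ Part' c, w p * ‖p - c‖ := mul_le_mul_of_nonneg_right hcoef hnn
        _ = ∑ p ∈ Part' c, w p * ‖p - c‖ := one_mul _
        _ ≤ _ := hinner
    · rw [Finset.not_nonempty_iff_eq_empty] at hne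
      simp [hne]
  -- Step 2: rewrite the double sums over partitions as sums over P
  have hPeq' : P = C'.biUnion Part' := by
    apply Finset.Subset.antisymm
    · intro p hp
      obtain ⟨c, hc, hpc⟩ := h'cov p hp
      exact Finset.mem_biUnion.mpr ⟨c, hc, hpc⟩
    · intro p hp
      obtain ⟨c, hc, hpc⟩ := Finset.mem_biUnion.mp hp
      exact h'sub c hc hpc
  have hPeqs : P = Cstar.biUnion PartStar := by
    apply Finset.Subset.antisymm
    · intro p hp
      obtain ⟨c, hc, hpc⟩ := hscov p hp
      exact Finset.mem_biUnion.mpr ⟨c, hc, hpc⟩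
    · intro p hp
      obtain ⟨c, hc, hpc⟩ := Finset.mem_biUnion.mp hp
      exact hssub c hc hpc
  have hsum' : ∑ c ∈ C', ∑ p ∈ Part' c, 2 * (w p * m p) = ∑ p ∈ P, 2 * (w p * m p) := by
    rw [hPeq']
    exact (Finset.sum_biUnion (fun c hc c' hc' hne => h'dis c hc c' hc' hne)).symm
  have hsums : ∑ p ∈ P, 2 * (w p * m p) = ∑ c ∈ Cstar, ∑ p ∈ PartStar c, 2 * (w p * m p) := by
    rw [hPeqs]
    exact Finset.sum_biUnion (fun c hc c' hc' hne => hsdis c hc c' hc' hne)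
  -- Step 3: bound the sum over Cstar
  have key2 : ∑ c ∈ Cstar, ∑ p ∈ PartStar c, 2 * (w p * m p) ≤
      2 * L ^ 2 * relLoss Cstar PartStar w := by
    unfold relLoss
    rw [Finset.mul_sum]
    apply Finset.sum_le_sum
    intro c hc
    have hS : ∑ p ∈ PartStar c, 2 * (w p * m p) ≤ 2 * ∑ p ∈ PartStar c, w p * ‖p - c‖ := by
      rw [Finset.mul_sum]
      apply Finset.sum_le_sum
      intro p hp
      have hpP : p ∈ P := hssub c hc hp
      have hmle : m p ≤ ‖p - c‖ := Finset.inf'_le _ hc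
      have := mul_le_mul_of_nonneg_left hmle (hw p hpP)
      linarith
    by_cases hne : (PartStar c).Nonempty
    · have hnn : 0 ≤ ∑ p ∈ PartStar c, w p * ‖p - c‖ :=
        Finset.sum_nonneg fun p hp => mul_nonneg (hw p (hssub c hc hp)) (norm_nonneg _)
      set l : ℝ := Real.logb 2 ((PartStar c).card + 1) with hl
      have hl1 : (1 : ℝ) ≤ l := by
        have hcard : 1 ≤ (PartStar c).card := Finset.card_pos.mpr hne
        have : (2 : ℝ) ≤ (PartStar c).card + 1 := by
          have : (1 : ℝ) ≤ ((PartStar c).card : ℝ) := by exact_mod_cast hcard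
          linarith
        rw [hl]
        calc (1 : ℝ) = Real.logb 2 2 := (Real.logb_self_eq_one (by norm_num : (1:ℝ) < 2)).symm
          _ ≤ _ := Real.logb_le_logb_of_le (by norm_num : (1:ℝ) < 2) (by norm_num) this
      have hlL : l ≤ L := by
        have hcard : (PartStar c).card ≤ P.card := Finset.card_le_card (hssub c hc)
        rw [hl, hL]
        have h1 : ((PartStar c).card : ℝ) ≤ (P.card : ℝ) := by exact_mod_cast hcard
        exact Real.logb_le_logb_of_le (by norm_num : (1:ℝ) < 2) (by positivity) (by linarith)
      have hfac : (2 : ℝ) ≤ 2 * L ^ 2 * (1 / l ^ 2) := by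
        rw [mul_one_div, le_div_iff₀ (by positivity)]
        nlinarith
      calc ∑ p ∈ PartStar c, 2 * (w p * m p)
          ≤ 2 * ∑ p ∈ PartStar c, w p * ‖p - c‖ := hS
        _ ≤ (2 * L ^ 2 * (1 / l ^ 2)) * ∑ p ∈ PartStar c, w p * ‖p - c‖ :=
            mul_le_mul_of_nonneg_right hfac hnn
        _ = 2 * L ^ 2 * ((1 / l ^ 2) * ∑ p ∈ PartStar c, w p * ‖p - c‖) := by ring
    · rw [Finset.not_nonempty_iff_eq_empty] at hne
      simp [hne]
  calc relLoss C' Part' w ≤ ∑ c ∈ C', ∑ p ∈ Part' c, 2 * (w p * m p) := key1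
    _ = ∑ p ∈ P, 2 * (w p * m p) := hsum'
    _ = ∑ c ∈ Cstar, ∑ p ∈ PartStar c, 2 * (w p * m p) := hsums
    _ ≤ 2 * L ^ 2 * relLoss Cstar PartStar w := key2
end

section
/- Let P ⊂ ℝ^d be a finite set of size n ≥ k ≥ 1, let w : P → [0,∞), and fix a nearest-point assignment rule for computing ℓ̃. Suppose the minimum of ℓ̃((P,w),C) over all sets C ⊂ ℝ^d with |C| = k is attained by some set C*. Then the minimum of ℓ̃((P,w),C) over all k-element subsets C ⊆ P satisfies min_{C⊆P, |C|=k} ℓ̃((P,w),C) ≤ 2·log₂²(1+n)·ℓ̃((P,w),C*); that is, the optimal k-element subset of P is a 2·log₂²(1+n)-approximation for the relaxed fitting problem. -/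
open scoped Classical

/-- Summing a function over a partition of `P` equals summing over `P`. -/
lemma partition_sum {d : ℕ} {P C : Finset (EuclideanSpace ℝ (Fin d))}
    {Part : EuclideanSpace ℝ (Fin d) → Finset (EuclideanSpace ℝ (Fin d))}
    (h : IsNearPartition P C Part) (g : EuclideanSpace ℝ (Fin d) → ℝ) :
    ∑ c ∈ C, ∑ p ∈ Part c, g p = ∑ p ∈ P, g p := by
  obtain ⟨h1, h2, h3, -⟩ := h
  have hP : P = C.biUnion Part := by
    ext p
    simp only [Finset.mem_biUnion]
    exact ⟨h2 p, fun ⟨c, hc, hp⟩ => h1 c hc hp⟩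
  rw [hP]
  exact (Finset.sum_biUnion (fun a ha b hb hab => h3 a ha b hb hab)).symm

/-- If `rule` is a fixed nearest-point assignment rule and the minimum of
`ℓ̃((P,w),·)` over all `k`-element sets `C ⊂ ℝ^d` is attained by `C*`, then the minimum
over all `k`-element subsets of `P` is at most `2·log₂²(1+n)·ℓ̃((P,w),C*)`. -/
theorem stmt_4 {d k : ℕ} (hk : 1 ≤ k) (P : Finset (EuclideanSpace ℝ (Fin d)))
    (hn : k ≤ P.card)
    (w : EuclideanSpace ℝ (Fin d) → ℝ) (hw : ∀ p ∈ P, 0 ≤ w p)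
    (rule : Finset (EuclideanSpace ℝ (Fin d)) →
      EuclideanSpace ℝ (Fin d) → Finset (EuclideanSpace ℝ (Fin d)))
    (hrule : ∀ C : Finset (EuclideanSpace ℝ (Fin d)), C.Nonempty →
      IsNearPartition P C (rule C))
    (Cstar : Finset (EuclideanSpace ℝ (Fin d))) (hCstar : Cstar.card = k)
    (hmin : ∀ C : Finset (EuclideanSpace ℝ (Fin d)), C.card = k →
      relLoss Cstar (rule Cstar) w ≤ relLoss C (rule C) w) :
    (P.powersetCard k).inf' (Finset.powersetCard_nonempty.mpr hn)
        (fun C => relLoss C (rule C) w) ≤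
      2 * (Real.logb 2 (1 + P.card)) ^ 2 * relLoss Cstar (rule Cstar) w := by
  classical
  have hCstar_ne : Cstar.Nonempty := Finset.card_pos.mp (by omega)
  have hNP := hrule Cstar hCstar_ne
  obtain ⟨h1, h2, h3, h4⟩ := hNP
  -- center assignment for the optimal partition
  choose! ctr hctr1 hctr2 using h2
  -- representative: nearest point of each nonempty cluster
  have hex : ∀ c : EuclideanSpace ℝ (Fin d), (rule Cstar c).Nonempty →
      ∃ q ∈ rule Cstar c, ∀ p ∈ rule Cstar c, ‖q - c‖ ≤ ‖p - c‖ :=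
    fun c h => Finset.exists_min_image _ (fun p => ‖p - c‖) h
  choose! r hr1 hr2 using hex
  set F : Finset (EuclideanSpace ℝ (Fin d)) :=
    Cstar.filter (fun c => (rule Cstar c).Nonempty) with hF
  have hC0sub : F.image r ⊆ P := by
    intro x hx
    obtain ⟨c, hc, rfl⟩ := Finset.mem_image.mp hx
    rw [hF, Finset.mem_filter] at hc
    exact h1 c hc.1 (hr1 c hc.2)
  have hC0card : (F.image r).card ≤ k :=
    le_trans Finset.card_image_le (le_trans (Finset.card_filter_le _ _) hCstar.le)
  obtain ⟨C', hC0C', hC'P, hC'card⟩ :=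
    Finset.exists_subsuperset_card_eq hC0sub hC0card hn
  have hC'ne : C'.Nonempty := Finset.card_pos.mp (by omega)
  obtain ⟨g1, g2, g3, g4⟩ := hrule C' hC'ne
  -- key pointwise bound
  have hrc : ∀ p ∈ P, r (ctr p) ∈ C' := by
    intro p hp
    exact hC0C' (Finset.mem_image_of_mem r
      (Finset.mem_filter.mpr ⟨hctr1 p hp, ⟨p, hctr2 p hp⟩⟩))
  have key : ∀ c' ∈ C', ∀ p ∈ rule C' c', ‖p - c'‖ ≤ 2 * ‖p - ctr p‖ := by
    intro c' hc' p hp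
    have hpP : p ∈ P := g1 c' hc' hp
    have h5 := g4 c' hc' p hp (r (ctr p)) (hrc p hpP)
    have hmem : p ∈ rule Cstar (ctr p) := hctr2 p hpP
    have h6 : ‖p - r (ctr p)‖ ≤ ‖p - ctr p‖ + ‖ctr p - r (ctr p)‖ := by
      have heq : p - r (ctr p) = (p - ctr p) + (ctr p - r (ctr p)) := by abel
      rw [heq]; exact norm_add_le _ _
    have h7 : ‖ctr p - r (ctr p)‖ ≤ ‖p - ctr p‖ := by
      rw [norm_sub_rev]
      exact hr2 (ctr p) ⟨p, hmem⟩ p hmem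
    linarith
  -- sums
  set L : ℝ := Real.logb 2 (1 + P.card) with hL
  have hwnn : ∀ c ∈ Cstar, ∀ p ∈ rule Cstar c, 0 ≤ w p * ‖p - c‖ := by
    intro c hc p hp
    exact mul_nonneg (hw p (h1 c hc hp)) (norm_nonneg _)
  -- step 1: relLoss C' ≤ ∑_{p∈P} 2 * w p * ‖p - ctr p‖
  have step1 : relLoss C' (rule C') w ≤ ∑ p ∈ P, 2 * (w p * ‖p - ctr p‖) := by
    rw [← partition_sum ⟨g1, g2, g3, g4⟩ (fun p => 2 * (w p * ‖p - ctr p‖))]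
    unfold relLoss
    apply Finset.sum_le_sum
    intro c' hc'
    rcases Finset.eq_empty_or_nonempty (rule C' c') with he | hne
    · simp [he]
    · have hcard : (1 : ℝ) ≤ ((rule C' c').card : ℝ) := by
        exact_mod_cast Finset.card_pos.mpr hne
      have hlb : (1 : ℝ) ≤ Real.logb 2 ((rule C' c').card + 1) := by
        have := Real.logb_le_logb_of_le one_lt_two (by norm_num : (0:ℝ) < 2)
          (by linarith : (2:ℝ) ≤ (rule C' c').card + 1)
        rwa [Real.logb_self_eq_one one_lt_two] at this
      have hcoeff : 1 / (Real.logb 2 ((rule C' c').card + 1)) ^ 2 ≤ 1 := by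
        rw [div_le_one (by positivity)]
        nlinarith
      have hinner_nn : 0 ≤ ∑ p ∈ rule C' c', w p * ‖p - c'‖ := by
        apply Finset.sum_nonneg
        intro p hp
        exact mul_nonneg (hw p (g1 c' hc' hp)) (norm_nonneg _)
      calc (1 / (Real.logb 2 ((rule C' c').card + 1)) ^ 2) *
              ∑ p ∈ rule C' c', w p * ‖p - c'‖
          ≤ 1 * ∑ p ∈ rule C' c', w p * ‖p - c'‖ :=
            mul_le_mul_of_nonneg_right hcoeff hinner_nn
        _ = ∑ p ∈ rule C' c', w p * ‖p - c'‖ := one_mul _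
        _ ≤ ∑ p ∈ rule C' c', 2 * (w p * ‖p - ctr p‖) := by
            apply Finset.sum_le_sum
            intro p hp
            have hpP : p ∈ P := g1 c' hc' hp
            have := key c' hc' p hp
            have hwp := hw p hpP
            nlinarith [norm_nonneg (p - c'), norm_nonneg (p - ctr p)]
  -- step 2: rewrite over the Cstar partition
  have step2 : ∑ p ∈ P, 2 * (w p * ‖p - ctr p‖) =
      2 * ∑ c ∈ Cstar, ∑ p ∈ rule Cstar c, w p * ‖p - c‖ := by
    rw [← partition_sum (hrule Cstar hCstar_ne) (fun p => 2 * (w p * ‖p - ctr p‖)),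
      Finset.mul_sum]
    apply Finset.sum_congr rfl
    intro c hc
    rw [Finset.mul_sum]
    apply Finset.sum_congr rfl
    intro p hp
    have hpP : p ∈ P := h1 c hc hp
    have hceq : ctr p = c := by
      by_contra hne
      exact (Finset.disjoint_left.mp (h3 (ctr p) (hctr1 p hpP) c hc hne)
        (hctr2 p hpP)) hp
    rw [hceq]
  -- step 3: compare against relLoss Cstar
  have step3 : ∑ c ∈ Cstar, ∑ p ∈ rule Cstar c, w p * ‖p - c‖ ≤
      L ^ 2 * relLoss Cstar (rule Cstar) w := by
    unfold relLoss
    rw [Finset.mul_sum]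
    apply Finset.sum_le_sum
    intro c hc
    rcases Finset.eq_empty_or_nonempty (rule Cstar c) with he | hne
    · simp [he]
    · set m : ℕ := (rule Cstar c).card with hm
      have hm1 : (1 : ℝ) ≤ (m : ℝ) := by exact_mod_cast Finset.card_pos.mpr hne
      have hmn : (m : ℝ) ≤ (P.card : ℝ) := by
        exact_mod_cast Finset.card_le_card (h1 c hc)
      set Lc : ℝ := Real.logb 2 ((m : ℝ) + 1) with hLc
      have hLc1 : (1 : ℝ) ≤ Lc := by
        have := Real.logb_le_logb_of_le one_lt_two (by norm_num : (0:ℝ) < 2)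
          (by linarith : (2:ℝ) ≤ (m : ℝ) + 1)
        rwa [Real.logb_self_eq_one one_lt_two] at this
      have hLcL : Lc ≤ L := by
        rw [hLc, hL]
        exact Real.logb_le_logb_of_le one_lt_two (by linarith) (by linarith)
      have hS_nn : 0 ≤ ∑ p ∈ rule Cstar c, w p * ‖p - c‖ :=
        Finset.sum_nonneg (fun p hp => hwnn c hc p hp)
      have hfactor : (1 : ℝ) ≤ L ^ 2 * (1 / Lc ^ 2) := by
        rw [mul_one_div, le_div_iff₀ (by positivity), one_mul]
        nlinarith
      calc ∑ p ∈ rule Cstar c, w p * ‖p - c‖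
          ≤ (L ^ 2 * (1 / Lc ^ 2)) * ∑ p ∈ rule Cstar c, w p * ‖p - c‖ :=
            le_mul_of_one_le_left hS_nn hfactor
        _ = L ^ 2 * ((1 / Lc ^ 2) * ∑ p ∈ rule Cstar c, w p * ‖p - c‖) := by ring
  -- combine
  have hrel : relLoss C' (rule C') w ≤ 2 * L ^ 2 * relLoss Cstar (rule Cstar) w := by
    calc relLoss C' (rule C') w
        ≤ ∑ p ∈ P, 2 * (w p * ‖p - ctr p‖) := step1
      _ = 2 * ∑ c ∈ Cstar, ∑ p ∈ rule Cstar c, w p * ‖p - c‖ := step2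
      _ ≤ 2 * (L ^ 2 * relLoss Cstar (rule Cstar) w) := by linarith [step3]
      _ = 2 * L ^ 2 * relLoss Cstar (rule Cstar) w := by ring
  have hmem : C' ∈ P.powersetCard k := Finset.mem_powersetCard.mpr ⟨hC'P, hC'card⟩
  exact le_trans (Finset.inf'_le _ hmem) hrel
end

section
/- Let P ⊂ ℝ^d be a finite nonempty set and let k ≥ 1 be an integer. Set m := ⌈(15/(16k))·|P|⌉. Then there exists q ∈ P such that cost(P,q,m) ≤ 2·cost(P,q',m) for every q' ∈ ℝ^d, where cost(P,x,m) denotes the minimum over all subsets S ⊆ P with |S| = m of ∑_{p∈S} ‖x − p‖₂ (equivalently, the sum of the m smallest Euclidean distances from x to points of P). In particular, P contains a (15/16k, 1/16, 2)-median of P. -/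
/-!
Take `q ∈ P` minimising `cost P · m` over `P`. Given any `q'`, let `S` be an optimal `m`-subset
for `q'` and `p₀ ∈ S` its point nearest to `q'`. By the triangle inequality
`‖p₀ - p‖ ≤ ‖q' - p₀‖ + ‖q' - p‖ ≤ 2 ‖q' - p‖` on average over `S`, so
`cost P q m ≤ cost P p₀ m ≤ ∑_{p ∈ S} ‖p₀ - p‖ ≤ 2 cost P q' m`.
The fraction `15/(16k)` only matters through `m ≤ |P|`.
-/

open scoped Classical

/-- `cost P x m` is the minimum of `∑_{p∈S} ‖x−p‖₂` over subsets `S ⊆ P` with `|S| = m`,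
i.e. the sum of the `m` smallest Euclidean distances from `x` to points of `P`. -/
noncomputable def cost {d : ℕ} (P : Finset (EuclideanSpace ℝ (Fin d)))
    (x : EuclideanSpace ℝ (Fin d)) (m : ℕ) : ℝ :=
  sInf ((fun S : Finset (EuclideanSpace ℝ (Fin d)) => ∑ p ∈ S, ‖x - p‖) ''
    {S : Finset (EuclideanSpace ℝ (Fin d)) | S ⊆ P ∧ S.card = m})

open Finset

theorem sum_norm_sub_le_two_mul_of_forall_le {E : Type*} [SeminormedAddCommGroup E]
    {S : Finset E} {x p₀ : E} (hp₀ : ∀ p ∈ S, ‖x - p₀‖ ≤ ‖x - p‖) :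
    ∑ p ∈ S, ‖p₀ - p‖ ≤ 2 * ∑ p ∈ S, ‖x - p‖ := by
  rw [two_mul, ← sum_add_distrib]
  refine sum_le_sum fun p hp => ?_
  calc ‖p₀ - p‖ ≤ ‖p₀ - x‖ + ‖x - p‖ := norm_sub_le_norm_sub_add_norm_sub ..
    _ = ‖x - p₀‖ + ‖x - p‖ := by rw [norm_sub_rev]
    _ ≤ ‖x - p‖ + ‖x - p‖ := by gcongr; exact hp₀ p hp

section Cost

variable {d : ℕ} (P : Finset (EuclideanSpace ℝ (Fin d))) (x : EuclideanSpace ℝ (Fin d))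

theorem finite_costCandidates (m : ℕ) :
    ((fun S : Finset (EuclideanSpace ℝ (Fin d)) => ∑ p ∈ S, ‖x - p‖) ''
      {S | S ⊆ P ∧ S.card = m}).Finite :=
  (P.powerset.finite_toSet.subset fun S hS => by simpa using hS.1).image _

theorem cost_le_sum {m : ℕ} {S : Finset (EuclideanSpace ℝ (Fin d))} (hS : S ⊆ P)
    (hcard : S.card = m) : cost P x m ≤ ∑ p ∈ S, ‖x - p‖ :=
  csInf_le (finite_costCandidates P x m).bddBelow ⟨S, ⟨hS, hcard⟩, rfl⟩

theorem exists_sum_eq_cost {m : ℕ} (hm : m ≤ P.card) :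
    ∃ S ⊆ P, S.card = m ∧ cost P x m = ∑ p ∈ S, ‖x - p‖ := by
  obtain ⟨S, hS, hcard⟩ := exists_subset_card_eq hm
  obtain ⟨T, ⟨hTP, hTcard⟩, hT⟩ :=
    Set.Nonempty.csInf_mem
      ((Set.nonempty_of_mem (s := {S | S ⊆ P ∧ S.card = m}) ⟨hS, hcard⟩).image _)
      (finite_costCandidates P x m)
  exact ⟨T, hTP, hTcard, hT.symm⟩

theorem cost_le_two_mul_cost_of_forall_le {m : ℕ} (hm : m ≤ P.card)
    {q : EuclideanSpace ℝ (Fin d)}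
    (hq : ∀ p ∈ P, cost P q m ≤ cost P p m) (q' : EuclideanSpace ℝ (Fin d)) :
    cost P q m ≤ 2 * cost P q' m := by
  obtain ⟨S, hSP, hScard, hS⟩ := exists_sum_eq_cost P q' hm
  rw [hS]
  rcases S.eq_empty_or_nonempty with rfl | hSne
  · simpa using cost_le_sum P q hSP hScard
  obtain ⟨p₀, hp₀S, hp₀⟩ := S.exists_min_image (fun p => ‖q' - p‖) hSne
  calc cost P q m ≤ cost P p₀ m := hq p₀ (hSP hp₀S)
    _ ≤ ∑ p ∈ S, ‖p₀ - p‖ := cost_le_sum P p₀ hSP hScard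
    _ ≤ 2 * ∑ p ∈ S, ‖q' - p‖ := sum_norm_sub_le_two_mul_of_forall_le hp₀

theorem exists_mem_cost_le_two_mul_cost (hP : P.Nonempty) {m : ℕ} (hm : m ≤ P.card) :
    ∃ q ∈ P, ∀ q' : EuclideanSpace ℝ (Fin d), cost P q m ≤ 2 * cost P q' m := by
  obtain ⟨q, hqP, hq⟩ := P.exists_min_image (fun q => cost P q m) hP
  exact ⟨q, hqP, cost_le_two_mul_cost_of_forall_le P hm hq⟩

end Cost

theorem stmt_5_general {d k : ℕ} (P : Finset (EuclideanSpace ℝ (Fin d)))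
    (hP : P.Nonempty) :
    ∃ q ∈ P, ∀ q' : EuclideanSpace ℝ (Fin d),
      cost P q ⌈(15 / (16 * (k : ℝ))) * P.card⌉₊ ≤
        2 * cost P q' ⌈(15 / (16 * (k : ℝ))) * P.card⌉₊ := by
  refine exists_mem_cost_le_two_mul_cost P hP (Nat.ceil_le.mpr ?_)
  have hfrac : 15 / (16 * (k : ℝ)) ≤ 1 := by
    rcases k.eq_zero_or_pos with rfl | hk
    · simp -- `15 / 0 = 0` in `ℝ`
    · rw [div_le_one (by positivity)]
      have : (1 : ℝ) ≤ k := by exact_mod_cast hk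
      linarith
  exact mul_le_of_le_one_left (Nat.cast_nonneg _) hfrac

/-- With `m := ⌈(15/(16k))·|P|⌉`, there exists `q ∈ P` such that
`cost(P,q,m) ≤ 2·cost(P,q',m)` for every `q' ∈ ℝ^d`; i.e. `P` contains a
`(15/16k, 1/16, 2)`-median of itself. -/
theorem stmt_5 {d k : ℕ} (hk : 1 ≤ k) (P : Finset (EuclideanSpace ℝ (Fin d)))
    (hP : P.Nonempty) :
    ∃ q ∈ P, ∀ q' : EuclideanSpace ℝ (Fin d),
      cost P q ⌈(15 / (16 * (k : ℝ))) * P.card⌉₊ ≤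
        2 * cost P q' ⌈(15 / (16 * (k : ℝ))) * P.card⌉₊ :=
  stmt_5_general P hP
end

section
/- Let P ⊂ ℝ^d be a finite nonempty set of size n, let k ≥ 1 be an integer, let C ⊂ ℝ^d with |C| = k, and let {P_c}_{c∈C} be any nearest-point partition of P with respect to C. Then ℓ(P,C) ≥ (1/(n+1))·inf_{q∈ℝ^d} cost(P,q,⌈n/k⌉), where ℓ(P,C) = ∑_{c∈C} (1/(|P_c|+1)) ∑_{p∈P_c} ‖p−c‖₂ and cost(P,q,m) is the sum of the m smallest Euclidean distances from q to points of P. -/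
open scoped Classical

/-- The fitting loss `ℓ(P,C) = ∑_{c∈C} (1/(|P_c|+1)) ∑_{p∈P_c} ‖p−c‖₂`. -/
noncomputable def loss {d : ℕ} (C : Finset (EuclideanSpace ℝ (Fin d)))
    (Part : EuclideanSpace ℝ (Fin d) → Finset (EuclideanSpace ℝ (Fin d))) : ℝ :=
  ∑ c ∈ C, (1 / ((Part c).card + 1 : ℝ)) * ∑ p ∈ Part c, ‖p - c‖

/-- For any `k`-element center set `C` and any nearest-point partition,
`ℓ(P,C) ≥ (1/(n+1))·inf_{q∈ℝ^d} cost(P,q,⌈n/k⌉)`. -/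
theorem stmt_7 {d k : ℕ} (hk : 1 ≤ k) (P : Finset (EuclideanSpace ℝ (Fin d)))
    (hP : P.Nonempty) (C : Finset (EuclideanSpace ℝ (Fin d))) (hC : C.card = k)
    (Part : EuclideanSpace ℝ (Fin d) → Finset (EuclideanSpace ℝ (Fin d)))
    (hpart : IsNearPartition P C Part) :
    (1 / ((P.card : ℝ) + 1)) *
        (⨅ q : EuclideanSpace ℝ (Fin d), cost P q ⌈(P.card : ℝ) / (k : ℝ)⌉₊) ≤
      loss C Part := by
  obtain ⟨hsub, hcov, hdisj, -⟩ := hpart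
  set n := P.card with hn
  set m := ⌈(n : ℝ) / (k : ℝ)⌉₊ with hm
  have hk0 : (0:ℝ) < k := by exact_mod_cast hk
  have hsum : (n : ℝ) ≤ ∑ c ∈ C, ((Part c).card : ℝ) := by
    have h1 : P ⊆ C.biUnion Part := fun p hp => by
      obtain ⟨c, hc, hpc⟩ := hcov p hp
      exact Finset.mem_biUnion.mpr ⟨c, hc, hpc⟩
    have h2 : n ≤ ∑ c ∈ C, (Part c).card :=
      le_trans (Finset.card_le_card h1) Finset.card_biUnion_le
    exact_mod_cast h2
  have hCne : C.Nonempty := Finset.card_pos.mp (hC ▸ hk)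
  have hsum2 : ∑ _c ∈ C, (n:ℝ)/k ≤ ∑ c ∈ C, ((Part c).card : ℝ) := by
    rw [Finset.sum_const, hC, nsmul_eq_mul]
    calc (k:ℝ) * ((n:ℝ)/k) = n := by field_simp
    _ ≤ _ := hsum
  obtain ⟨c, hcC, hcard⟩ := Finset.exists_le_of_sum_le hCne hsum2
  have hmle : m ≤ (Part c).card := Nat.ceil_le.mpr hcard
  obtain ⟨S, hS, hScard⟩ := Finset.exists_subset_card_eq hmle
  have hcost_nonneg : ∀ q, 0 ≤ cost P q m := fun q =>
    Real.sInf_nonneg (by rintro x ⟨T, hT, rfl⟩; positivity)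
  have hbdd : BddBelow (Set.range fun q => cost P q m) :=
    ⟨0, by rintro x ⟨q, rfl⟩; exact hcost_nonneg q⟩
  have h1 : (⨅ q, cost P q m) ≤ cost P c m := ciInf_le hbdd c
  have h2 : cost P c m ≤ ∑ p ∈ Part c, ‖p - c‖ := by
    have hstep : cost P c m ≤ ∑ p ∈ S, ‖c - p‖ := by
      apply csInf_le
      · exact ⟨0, by rintro x ⟨T, hT, rfl⟩; positivity⟩
      · exact ⟨S, ⟨hS.trans (hsub c hcC), hScard⟩, rfl⟩
    refine hstep.trans ?_
    rw [show ∑ p ∈ S, ‖c - p‖ = ∑ p ∈ S, ‖p - c‖ from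
      Finset.sum_congr rfl fun p _ => norm_sub_rev _ _]
    exact Finset.sum_le_sum_of_subset_of_nonneg hS fun p _ _ => norm_nonneg _
  have hPcn : ((Part c).card : ℝ) ≤ n := by
    exact_mod_cast Finset.card_le_card (hsub c hcC)
  have hterm : (1 / ((n:ℝ)+1)) * ∑ p ∈ Part c, ‖p - c‖ ≤
      (1 / (((Part c).card : ℝ)+1)) * ∑ p ∈ Part c, ‖p - c‖ := by
    apply mul_le_mul_of_nonneg_right _ (Finset.sum_nonneg fun p _ => norm_nonneg _)
    exact one_div_le_one_div_of_le (by positivity) (by linarith)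
  have hloss : (1 / (((Part c).card : ℝ)+1)) * ∑ p ∈ Part c, ‖p - c‖ ≤ loss C Part := by
    apply Finset.single_le_sum
      (f := fun c => (1 / ((Part c).card + 1 : ℝ)) * ∑ p ∈ Part c, ‖p - c‖) _ hcC
    intro i _
    positivity
  calc (1 / ((n:ℝ)+1)) * (⨅ q, cost P q m)
      ≤ (1 / ((n:ℝ)+1)) * cost P c m :=
        mul_le_mul_of_nonneg_left h1 (by positivity)
    _ ≤ (1 / ((n:ℝ)+1)) * ∑ p ∈ Part c, ‖p - c‖ :=
        mul_le_mul_of_nonneg_left h2 (by positivity)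
    _ ≤ _ := hterm.trans hloss
end
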